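/- arXiv:0802.2903 — 2 statements merged into one kernel-verified Lean document; each statement's English description precedes it below -/
import Mathlib

section
/- Let F be a torsion free sheaf on a smooth projective threefold X fibered over a curve B, with fiber class 𝔣 and ample divisor H. Suppose F has good quotients, i.e. for every subsheaf F' ⊂ F with 0 < rk(F') < rk(F) one has μ_𝔣(F') < μ_𝔣(F), where μ_𝔣(G) = (c_1(G)·H·𝔣)/rk(G). Then there exists M_0 ≥ 0 such that F is μ-stable with respect to H + M𝔣 for all M ≥ M_0. -/
/-!
Integrality of ranks and degrees turns the strict inequality of relative slopes into a uniform
gap `μ_𝔣(F) - μ_𝔣(F') ≥ 1 / rk(F)²`. Since `μ_{H+M𝔣} = μ_H + 2M μ_𝔣` and `μ_H(F')` is bounded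
above, the term `2M (μ_𝔣(F) - μ_𝔣(F'))` dominates `μ_H(F') - μ_H(F)` once `M` is large,
uniformly in `F'`.
-/

section Slopes

variable {K : Type*} [Field K] [LinearOrder K] [IsStrictOrderedRing K]

theorem one_div_sq_le_sub_of_intCast_div_lt {a b : ℤ} {m n : ℕ} (hm : 0 < m) (hmn : m ≤ n)
    (h : (a : K) / m < b / n) : 1 / (n : K) ^ 2 ≤ b / n - a / m := by
  have hm' : (0 : K) < m := by exact_mod_cast hm
  have hn' : (0 : K) < n := by exact_mod_cast hm.trans_le hmn
  have hcross : a * n + 1 ≤ b * m := by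
    rw [div_lt_div_iff₀ hm' hn'] at h
    exact_mod_cast h
  have hmn' : (m : K) ≤ n := by exact_mod_cast hmn
  calc 1 / (n : K) ^ 2 ≤ 1 / (m * n) := by gcongr; nlinarith
    _ ≤ (b * m - a * n) / (m * n) := by
        gcongr
        exact le_sub_iff_add_le'.mpr (by exact_mod_cast hcross)
    _ = b / n - a / m := by field_simp

theorem exists_forall_add_mul_lt (C y : K) {ε : K} (hε : 0 < ε) :
    ∃ M₀ : K, 0 ≤ M₀ ∧ ∀ M : K, M₀ ≤ M → ∀ x u v : K, x ≤ C → ε ≤ v - u →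
      x + M * u < y + M * v := by
  refine ⟨max 0 ((C - y) / ε + 1), le_max_left _ _, fun M hM x u v hx huv => ?_⟩
  have hM_nonneg : 0 ≤ M := (le_max_left _ _).trans hM
  have hM_large : C - y < M * ε := by
    have := (le_max_right _ _).trans hM
    rw [← div_lt_iff₀ hε]
    linarith
  nlinarith [mul_le_mul_of_nonneg_left huv hM_nonneg]

end Slopes

theorem stmt_3_general (Sub : Type*) (rk : Sub → ℕ) (dH df : Sub → ℤ)
    (rkF : ℕ) (dHF dfF : ℤ)
    -- boundedness of slopes of subsheaves (maximal destabilizing subsheaf)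
    (hbound : ∃ Cb : ℚ, ∀ s : Sub, 0 < rk s → (dH s : ℚ) / rk s ≤ Cb)
    -- good quotients
    (hgood : ∀ s : Sub, 0 < rk s → rk s < rkF →
      (df s : ℚ) / rk s < (dfF : ℚ) / rkF) :
    ∃ M0 : ℚ, 0 ≤ M0 ∧ ∀ M : ℚ, M0 ≤ M → ∀ s : Sub, 0 < rk s → rk s < rkF →
      ((dH s : ℚ) + 2 * M * df s) / rk s < ((dHF : ℚ) + 2 * M * dfF) / rkF := by
  obtain rfl | hrkF := rkF.eq_zero_or_pos
  · exact ⟨0, le_rfl, fun _ _ _ _ hlt => absurd hlt (Nat.not_lt_zero _)⟩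
  obtain ⟨C, hC⟩ := hbound
  obtain ⟨M₀, hM₀, hlarge⟩ := exists_forall_add_mul_lt C ((dHF : ℚ) / rkF)
    (ε := 1 / (rkF : ℚ) ^ 2) (by positivity)
  refine ⟨M₀ / 2, by positivity, fun M hM s hs hlt => ?_⟩
  simp only [add_div, mul_div_assoc]
  exact hlarge (2 * M) (by linarith) _ _ _ (hC s hs)
    (one_div_sq_le_sub_of_intCast_div_lt hs hlt.le (hgood s hs hlt))

/-- A torsion free sheaf `F` on a fibered threefold with good
quotients (every proper-rank subsheaf has strictly smaller relative slope
`μ_𝔣 = c₁·H·𝔣/rk`) is `μ`-stable with respect to `H + M𝔣` for all `M ≥ M₀`.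
Subsheaves of `F` are abstracted as a type `Sub` with numerical invariants
`rk`, `dH = c₁·H²` and `df = c₁·H·𝔣`; the slope for the polarization `H + M𝔣`
is `(dH + 2M·df)/rk`, using `(H+M𝔣)² = H² + 2M H𝔣` and `𝔣² = 0`. -/
theorem stmt_3 (Sub : Type*) (rk : Sub → ℕ) (dH df : Sub → ℤ)
    (rkF : ℕ) (dHF dfF : ℤ) (hrkF : 0 < rkF)
    -- boundedness of slopes of subsheaves (maximal destabilizing subsheaf)
    (hbound : ∃ Cb : ℚ, ∀ s : Sub, 0 < rk s → (dH s : ℚ) / rk s ≤ Cb)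
    -- good quotients
    (hgood : ∀ s : Sub, 0 < rk s → rk s < rkF →
      (df s : ℚ) / rk s < (dfF : ℚ) / rkF) :
    ∃ M0 : ℚ, 0 ≤ M0 ∧ ∀ M : ℚ, M0 ≤ M → ∀ s : Sub, 0 < rk s → rk s < rkF →
      ((dH s : ℚ) + 2 * M * df s) / rk s < ((dHF : ℚ) + 2 * M * dfF) / rkF :=
  stmt_3_general Sub rk dH df rkF dHF dfF hbound hgood
end

section
/- Let S be a K3 surface, B a curve, X = S × B, and C ⊂ X a spectral curve flat of degree n over B, L a line bundle on C with χ(L) given, E = i_*L. Then the Chern character of F = Φ^N(E), computed from the exact triangle Rπ_{2*}π_1^*(E ⊗ O_X(E_div)) → Φ^N(E) → Φ^{I_Δ}(E) ⊗ O_X(E_div), equals (2n, nE_div + (2χ(L) + C·E_div)𝔣, −2nF_cl + χ(L)E_div·𝔣 − [C], −3χ(L) − C·E_div), where E_div = (l + 2h) × B, F_cl is the class of the section fiber {pt} × B, Td(X/B) = (1, 0, 2F_cl, 0), ch(E) = (0, 0, [C], χ(L)), and ch O_X(E_div) = (1, E_div, −2F_cl, 0). -/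
/-!
`ch E` lives in degrees `≥ 4` and `Td(X/B)`, `ch O_X(E_div)` have rank one, so multiplying `ch E`
by either only changes its degree-6 part, by pairing with the degree-2 part of the other factor.
The push-pull `P` then lands in degrees `0` and `2`, and the product of such a class with
`ch O_X(E_div)` is read off directly; the three GRR terms add up to the stated vector.
-/

/-- Multiplication of (truncated) Chern characters on a threefold, written in
degrees `(H⁰, H², H⁴, H⁶) = (ℚ, A1, A2, ℚ)` with bilinear products
`m11 : H²×H² → H⁴` and `m12 : H²×H⁴ → H⁶ = ℚ`. -/
def chMul {A1 A2 : Type*} [AddCommGroup A1] [Module ℚ A1]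
    [AddCommGroup A2] [Module ℚ A2]
    (m11 : A1 →ₗ[ℚ] A1 →ₗ[ℚ] A2) (m12 : A1 →ₗ[ℚ] A2 →ₗ[ℚ] ℚ)
    (a b : ℚ × A1 × A2 × ℚ) : ℚ × A1 × A2 × ℚ :=
  (a.1 * b.1,
   a.1 • b.2.1 + b.1 • a.2.1,
   a.1 • b.2.2.1 + b.1 • a.2.2.1 + m11 a.2.1 b.2.1,
   a.1 * b.2.2.2 + b.1 * a.2.2.2 + m12 a.2.1 b.2.2.1 + m12 b.2.1 a.2.2.1)

section ChernCharacter

variable {A1 A2 : Type*} [AddCommGroup A1] [Module ℚ A1] [AddCommGroup A2] [Module ℚ A2]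
  (m11 : A1 →ₗ[ℚ] A1 →ₗ[ℚ] A2) (m12 : A1 →ₗ[ℚ] A2 →ₗ[ℚ] ℚ)

theorem chMul_highDegree_left (c : A2) (x : ℚ) (D : A1) (z : A2) (w : ℚ) :
    chMul m11 m12 (0, 0, c, x) (1, D, z, w) = (0, 0, c, x + m12 D c) := by
  simp [chMul]

theorem chMul_lowDegree_left (r : ℚ) (D' D : A1) (z : A2) :
    chMul m11 m12 (r, D', 0, 0) (1, D, z, 0) = (r, r • D + D', r • z + m11 D' D, m12 D' z) := by
  simp [chMul]

end ChernCharacter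

theorem stmt_16_general (A1 A2 : Type*) [AddCommGroup A1] [Module ℚ A1]
    [AddCommGroup A2] [Module ℚ A2]
    (m11 : A1 →ₗ[ℚ] A1 →ₗ[ℚ] A2) (m12 : A1 →ₗ[ℚ] A2 →ₗ[ℚ] ℚ)
    (hm11symm : ∀ x y, m11 x y = m11 y x)
    (Ediv fB : A1) (Fcl C : A2) (n : ℤ) (χ : ℚ)
    (σ : A2 →ₗ[ℚ] ℚ)
    (hσC : σ C = n)
    (hfF : m12 fB Fcl = 1)
    (P : (ℚ × A1 × A2 × ℚ) → (ℚ × A1 × A2 × ℚ))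
    (hP : ∀ t, P t = (σ t.2.2.1, t.2.2.2 • fB, 0, 0))
    (chE chO Td chF : ℚ × A1 × A2 × ℚ)
    (hchE : chE = (0, 0, C, χ))
    (hchO : chO = (1, Ediv, (-2 : ℚ) • Fcl, 0))
    (hTd : Td = (1, 0, (2 : ℚ) • Fcl, 0))
    (hGRR : chF = P (chMul m11 m12 (chMul m11 m12 chE chO) Td)
      + chMul m11 m12 (P (chMul m11 m12 chE Td)) chO
      - chMul m11 m12 chE chO) :
    chF = ((2 * (n : ℚ)),
      (n : ℚ) • Ediv + (2 * χ + m12 Ediv C) • fB,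
      (-(2 * (n : ℚ))) • Fcl + χ • (m11 Ediv fB) - C,
      -3 * χ - m12 Ediv C) := by
  subst hchE hchO hTd hGRR
  simp only [chMul_highDegree_left, map_zero, LinearMap.zero_apply, add_zero, hP]
  rw [chMul_lowDegree_left]
  simp only [hσC, map_smul, LinearMap.smul_apply, hfF, hm11symm fB Ediv, Prod.mk_add_mk, Prod.mk_sub_mk, Prod.mk.injEq]
  refine ⟨by ring, by module, by module, by simp only [smul_eq_mul]; ring⟩

/-- On `X = S × B` (`S` a reflexive K3), for a spectral curve `C`
of degree `n` over `B`, `E = i_*L` with `ch(E) = (0,0,[C],χ(L))`,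
`ch O_X(E_div) = (1, E_div, −2F_cl, 0)`, `Td(X/B) = (1,0,2F_cl,0)`, and the GRR
formula for the exact triangle
`Rπ₂*π₁*(E⊗O(E_div)) → Φ^N(E) → Φ^{I_Δ}(E)⊗O(E_div)`, the Chern character of
`F = Φ^N(E)` is
`(2n, nE_div + (2χ + C·E_div)𝔣, −2nF_cl + χ E_div·𝔣 − [C], −3χ − C·E_div)`.
The push-pull operator `P = π₂*π₁*` kills degrees ≤ 2, integrates `H⁴` over `S`
via `σ` (with `σ[C] = n`, `σ F_cl = 1`) and sends `ϖ_X ↦ 𝔣`;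
also `𝔣·F_cl = ϖ_X` and `E_div·𝔣` has no `H⁴(S)`-component (`σ(E_div·𝔣) = 0`). -/
theorem stmt_16 (A1 A2 : Type*) [AddCommGroup A1] [Module ℚ A1]
    [AddCommGroup A2] [Module ℚ A2]
    (m11 : A1 →ₗ[ℚ] A1 →ₗ[ℚ] A2) (m12 : A1 →ₗ[ℚ] A2 →ₗ[ℚ] ℚ)
    (hm11symm : ∀ x y, m11 x y = m11 y x)
    (Ediv fB : A1) (Fcl C : A2) (n : ℤ) (χ : ℚ)
    (σ : A2 →ₗ[ℚ] ℚ)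
    (hσC : σ C = n) (hσF : σ Fcl = 1) (hσEf : σ (m11 Ediv fB) = 0)
    (hfF : m12 fB Fcl = 1)
    (P : (ℚ × A1 × A2 × ℚ) → (ℚ × A1 × A2 × ℚ))
    (hP : ∀ t, P t = (σ t.2.2.1, t.2.2.2 • fB, 0, 0))
    (chE chO Td chF : ℚ × A1 × A2 × ℚ)
    (hchE : chE = (0, 0, C, χ))
    (hchO : chO = (1, Ediv, (-2 : ℚ) • Fcl, 0))
    (hTd : Td = (1, 0, (2 : ℚ) • Fcl, 0))
    (hGRR : chF = P (chMul m11 m12 (chMul m11 m12 chE chO) Td)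
      + chMul m11 m12 (P (chMul m11 m12 chE Td)) chO
      - chMul m11 m12 chE chO) :
    chF = ((2 * (n : ℚ)),
      (n : ℚ) • Ediv + (2 * χ + m12 Ediv C) • fB,
      (-(2 * (n : ℚ))) • Fcl + χ • (m11 Ediv fB) - C,
      -3 * χ - m12 Ediv C) :=
  stmt_16_general A1 A2 m11 m12 hm11symm Ediv fB Fcl C n χ σ hσC hfF P hP chE chO Td chF hchE hchO
    hTd hGRR
end
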